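/- Let E be a Banach space, f : D → E a function on the dyadic points of [0,1]^d, and 0 ≤ α ≤ 1. For i ∈ ℕ set K_i := max_{(x,y)∈Δ_i} ‖f(x) − f(y)‖, and let M_α := sup{ ‖f(x) − f(y)‖ / |x − y|^α : x, y ∈ D, x ≠ y }. Then M_α ≤ 2^{1+α} d · Σ_{i=0}^∞ 2^{iα} K_i (both sides taken in [0,∞]). -/

import Mathlib

/-!
Chaining. Two distinct dyadic points `x ≠ y` of level `m` are `1/2^m`-separated, so there is a
level `n ≤ m` with `2^{-n} ≤ |x - y|` and all coordinate gaps at most `2·2^{-n}`. Rounding the grid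
coordinates down gives points `x_t` of level `t` with `x_m = x`; consecutive `x_{t+1}`, `x_t` are
joined by at most `d` edges of `Δ_{t+1}`, and `x_n`, `y_n` by at most `2d` edges of `Δ_n`. Hence
`‖f x - f y‖ ≤ 2d ∑_{t ≥ n} K_t`, and multiplying by `2^{nα} ≥ |x - y|^{-α}` gives the bound with
the constant `2d ≤ 2^{1+α} d`.
-/

open ENNReal

/-- The dyadic points of level `m` in `[0,1]^d`: each coordinate is `i·2^{-m}` for some
integer `0 ≤ i ≤ 2^m`. -/
def dyadicLevel (d m : ℕ) : Set (EuclideanSpace ℝ (Fin d)) :=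
  {x | ∀ j, ∃ i : ℕ, i ≤ 2 ^ m ∧ x j = (i : ℝ) * (2 : ℝ) ^ (-(m : ℤ))}

/-- The dyadic points of `[0,1]^d`. -/
def dyadicPts (d : ℕ) : Set (EuclideanSpace ℝ (Fin d)) := ⋃ m, dyadicLevel d m

/-- `Δ_m`: pairs of dyadic points of level `m` at euclidean distance exactly `2^{-m}`. -/
def dyadicPairs (d m : ℕ) :
    Set (EuclideanSpace ℝ (Fin d) × EuclideanSpace ℝ (Fin d)) :=
  {p | p.1 ∈ dyadicLevel d m ∧ p.2 ∈ dyadicLevel d m ∧ ‖p.1 - p.2‖ = (2 : ℝ) ^ (-(m : ℤ))}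

theorem Nat.cast_dist (a b : ℕ) : (Nat.dist a b : ℝ) = |(a : ℝ) - b| := by
  rcases le_total a b with h | h
  · rw [Nat.dist_eq_sub_of_le h, Nat.cast_sub h, abs_sub_comm, abs_of_nonneg (by simpa)]
  · rw [Nat.dist_eq_sub_of_le_right h, Nat.cast_sub h, abs_of_nonneg (by simpa)]

theorem Nat.exists_dist_eq_one_of_ne {a b : ℕ} (h : a ≠ b) :
    ∃ c, Nat.dist c b = 1 ∧ Nat.dist a c + 1 = Nat.dist a b ∧ c ≤ max a b := by
  rcases h.lt_or_gt with h | h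
  · exact ⟨b - 1, by unfold Nat.dist; omega⟩
  · exact ⟨b + 1, by unfold Nat.dist; omega⟩

theorem Nat.dist_div_le_two {a b P : ℕ} (h : Nat.dist a b ≤ 2 * P) :
    Nat.dist (a / P) (b / P) ≤ 2 := by
  rcases Nat.eq_zero_or_pos P with rfl | hP
  · simp [Nat.dist_self]
  have key : ∀ {a b : ℕ}, b ≤ a + 2 * P → b / P ≤ a / P + 2 := fun hab =>
    (Nat.div_le_div_right hab).trans_eq (by rw [Nat.add_mul_div_right _ _ hP])
  have hab := key (a := a) (b := b)
  have hba := key (a := b) (b := a)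
  unfold Nat.dist at *
  omega

-- `min δ 1` covers `n = 0`, where the coordinate gaps in `[0,1]^d` are only bounded by `1`.
theorem exists_dyadic_scale {δ : ℝ} {m : ℕ} (hm : 1 / 2 ^ m ≤ δ) :
    ∃ n ≤ m, 1 / 2 ^ n ≤ δ ∧ min δ 1 ≤ 2 / 2 ^ n := by
  classical
  have hex : ∃ n : ℕ, 1 / (2 : ℝ) ^ n ≤ δ := ⟨m, hm⟩
  refine ⟨Nat.find hex, Nat.find_min' hex hm, Nat.find_spec hex, ?_⟩
  rcases hn : Nat.find hex with _ | n
  · norm_num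
  · have hlt : δ < 1 / 2 ^ n := not_le.1 (Nat.find_min hex (by omega))
    have h2 : (2 : ℝ) / 2 ^ (n + 1) = 1 / 2 ^ n := by rw [pow_succ]; field_simp
    exact h2 ▸ (min_le_left _ _).trans hlt.le

theorem EuclideanSpace.abs_apply_le_norm {ι : Type*} [Fintype ι] (x : EuclideanSpace ℝ ι)
    (j : ι) : |x j| ≤ ‖x‖ :=
  Real.norm_eq_abs (x j) ▸ PiLp.norm_apply_le x j

noncomputable def dyadicGrid (d n : ℕ) (a : Fin d → ℕ) : EuclideanSpace ℝ (Fin d) :=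
  WithLp.toLp 2 fun j => (a j : ℝ) / 2 ^ n

section DyadicGrid

variable {d n : ℕ}

@[simp]
theorem dyadicGrid_apply (a : Fin d → ℕ) (j : Fin d) : dyadicGrid d n a j = a j / 2 ^ n := rfl

theorem dyadicGrid_mem_dyadicLevel {a : Fin d → ℕ} (ha : ∀ j, a j ≤ 2 ^ n) :
    dyadicGrid d n a ∈ dyadicLevel d n :=
  fun j => ⟨a j, ha j, by simp [div_eq_mul_inv]⟩

theorem exists_dyadicGrid_eq {x : EuclideanSpace ℝ (Fin d)} (hx : x ∈ dyadicLevel d n) :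
    ∃ a : Fin d → ℕ, (∀ j, a j ≤ 2 ^ n) ∧ dyadicGrid d n a = x := by
  choose a ha hxa using hx
  exact ⟨a, ha, PiLp.ext fun j => by simp [hxa, div_eq_mul_inv]⟩

theorem dyadicGrid_add_two_pow_mul (a : Fin d → ℕ) (k : ℕ) :
    dyadicGrid d (n + k) (fun j => 2 ^ k * a j) = dyadicGrid d n a := by
  ext j
  simp only [dyadicGrid_apply, pow_add, Nat.cast_mul, Nat.cast_pow, Nat.cast_ofNat]
  field_simp

theorem dyadicLevel_mono : Monotone (dyadicLevel d) := by
  intro m m' h x hx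
  obtain ⟨k, rfl⟩ := Nat.exists_eq_add_of_le h
  obtain ⟨a, ha, rfl⟩ := exists_dyadicGrid_eq hx
  rw [← dyadicGrid_add_two_pow_mul a k]
  exact dyadicGrid_mem_dyadicLevel fun j => by rw [pow_add, mul_comm]; gcongr; exact ha j

theorem abs_dyadicGrid_sub_apply (a b : Fin d → ℕ) (j : Fin d) :
    |(dyadicGrid d n a - dyadicGrid d n b) j| = Nat.dist (a j) (b j) / 2 ^ n := by
  simp [← sub_div, abs_div, Nat.cast_dist]

theorem norm_dyadicGrid_update_sub {a : Fin d → ℕ} {j : Fin d} {c : ℕ}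
    (hc : Nat.dist c (a j) = 1) :
    ‖dyadicGrid d n (Function.update a j c) - dyadicGrid d n a‖ = (2 : ℝ) ^ (-(n : ℤ)) := by
  have : dyadicGrid d n (Function.update a j c) - dyadicGrid d n a
      = PiLp.single 2 j (((c : ℝ) - a j) / 2 ^ n) := by
    ext k
    rcases eq_or_ne k j with rfl | hk
    · simp [sub_div]
    · simp [hk]
  rw [this, PiLp.norm_single, Real.norm_eq_abs, abs_div, ← Nat.cast_dist, hc]
  simp

theorem one_div_two_pow_le_norm_dyadicGrid_sub {a b : Fin d → ℕ} (hab : a ≠ b) :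
    1 / 2 ^ n ≤ ‖dyadicGrid d n a - dyadicGrid d n b‖ := by
  obtain ⟨j, hj⟩ := Function.ne_iff.1 hab
  calc (1 : ℝ) / 2 ^ n ≤ Nat.dist (a j) (b j) / 2 ^ n := by
        gcongr
        exact_mod_cast Nat.dist_pos_of_ne hj
    _ = |(dyadicGrid d n a - dyadicGrid d n b) j| := (abs_dyadicGrid_sub_apply a b j).symm
    _ ≤ _ := EuclideanSpace.abs_apply_le_norm _ j

theorem dist_le_of_min_norm_dyadicGrid_sub_le {k : ℕ} {a b : Fin d → ℕ}
    (ha : ∀ j, a j ≤ 2 ^ (n + k)) (hb : ∀ j, b j ≤ 2 ^ (n + k))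
    (h : min ‖dyadicGrid d (n + k) a - dyadicGrid d (n + k) b‖ 1 ≤ 2 / 2 ^ n) (j : Fin d) :
    Nat.dist (a j) (b j) ≤ 2 * 2 ^ k := by
  have hcoord := abs_dyadicGrid_sub_apply (n := n + k) a b j
  have hle_one : (Nat.dist (a j) (b j) : ℝ) / 2 ^ (n + k) ≤ 1 := by
    rw [div_le_one (by positivity)]
    have := ha j
    have := hb j
    exact_mod_cast (show Nat.dist (a j) (b j) ≤ 2 ^ (n + k) by unfold Nat.dist; omega)
  have hle : (Nat.dist (a j) (b j) : ℝ) / 2 ^ (n + k) ≤ 2 / 2 ^ n :=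
    (le_min (hcoord ▸ EuclideanSpace.abs_apply_le_norm _ j) hle_one).trans h
  rw [div_le_div_iff₀ (by positivity) (by positivity), pow_add, mul_left_comm,
    mul_comm _ ((2 : ℝ) ^ n)] at hle
  exact_mod_cast le_of_mul_le_mul_left hle (by positivity)

end DyadicGrid

section ChainBounds

variable {X : Type*} [PseudoEMetricSpace X] {d : ℕ} (f : EuclideanSpace ℝ (Fin d) → X)

theorem edist_dyadicGrid_le_sum_dist_mul {n : ℕ} {K : ℝ≥0∞}
    (hK : ∀ p ∈ dyadicPairs d n, edist (f p.1) (f p.2) ≤ K) {a b : Fin d → ℕ}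
    (ha : ∀ j, a j ≤ 2 ^ n) (hb : ∀ j, b j ≤ 2 ^ n) :
    edist (f (dyadicGrid d n a)) (f (dyadicGrid d n b)) ≤ (∑ j, Nat.dist (a j) (b j)) * K := by
  induction h : ∑ j, Nat.dist (a j) (b j) generalizing b with
  | zero =>
    have : a = b := funext fun j =>
      Nat.eq_of_dist_eq_zero (Finset.sum_eq_zero_iff.1 h j (Finset.mem_univ j))
    simp [this]
  | succ S ih =>
    obtain ⟨j, hj⟩ : ∃ j, a j ≠ b j := by
      by_contra! hab
      simp [hab, Nat.dist_self] at h
    obtain ⟨c, hcb, hac, hc⟩ := Nat.exists_dist_eq_one_of_ne hj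
    set b' := Function.update b j c
    have hb' : ∀ k, b' k ≤ 2 ^ n := by
      intro k
      rcases eq_or_ne k j with rfl | hk
      · simp only [b', Function.update_self]
        exact hc.trans (max_le (ha k) (hb k))
      · simpa [b', hk] using hb k
    have hS : ∑ k, Nat.dist (a k) (b' k) = S := by
      have split (g : Fin d → ℕ) : ∑ k, g k = g j + ∑ k ∈ Finset.univ.erase j, g k :=
        (Finset.add_sum_erase _ _ (Finset.mem_univ j)).symm
      have hrest : ∑ k ∈ Finset.univ.erase j, Nat.dist (a k) (b' k)
          = ∑ k ∈ Finset.univ.erase j, Nat.dist (a k) (b k) :=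
        Finset.sum_congr rfl fun k hk => by simp [b', Finset.ne_of_mem_erase hk]
      rw [split] at h ⊢
      simp only [b', Function.update_self] at hrest ⊢
      omega
    calc edist (f (dyadicGrid d n a)) (f (dyadicGrid d n b))
        ≤ edist (f (dyadicGrid d n a)) (f (dyadicGrid d n b'))
          + edist (f (dyadicGrid d n b')) (f (dyadicGrid d n b)) := edist_triangle _ _ _
      _ ≤ S * K + K := by
        gcongr
        · exact ih hb' hS
        · exact hK (dyadicGrid d n b', dyadicGrid d n b) ⟨dyadicGrid_mem_dyadicLevel hb',
            dyadicGrid_mem_dyadicLevel hb, norm_dyadicGrid_update_sub hcb⟩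
      _ = (S + 1 : ℕ) * K := by push_cast; ring

theorem edist_dyadicGrid_succ_div_two_le {n : ℕ} {K : ℝ≥0∞}
    (hK : ∀ p ∈ dyadicPairs d (n + 1), edist (f p.1) (f p.2) ≤ K) {a : Fin d → ℕ}
    (ha : ∀ j, a j ≤ 2 ^ (n + 1)) :
    edist (f (dyadicGrid d (n + 1) a)) (f (dyadicGrid d n fun j => a j / 2)) ≤ d * K := by
  rw [← dyadicGrid_add_two_pow_mul (fun j => a j / 2) 1]
  refine (edist_dyadicGrid_le_sum_dist_mul f hK ha fun j => ?_).trans ?_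
  · have := ha j
    omega
  · have hsum : ∑ j, Nat.dist (a j) (2 ^ 1 * (a j / 2)) ≤ ∑ _j : Fin d, 1 :=
      Finset.sum_le_sum fun j _ => by unfold Nat.dist; omega
    rw [Finset.sum_const, Finset.card_univ, Fintype.card_fin, smul_eq_mul, mul_one] at hsum
    gcongr

theorem edist_dyadicGrid_div_two_pow_le {K : ℕ → ℝ≥0∞}
    (hK : ∀ n, ∀ p ∈ dyadicPairs d n, edist (f p.1) (f p.2) ≤ K n) (n k : ℕ) {a : Fin d → ℕ}
    (ha : ∀ j, a j ≤ 2 ^ (n + k)) :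
    edist (f (dyadicGrid d (n + k) a)) (f (dyadicGrid d n fun j => a j / 2 ^ k))
      ≤ ∑ t ∈ Finset.range k, d * K (n + t + 1) := by
  induction k generalizing a with
  | zero => simp
  | succ k ih =>
    have ha' : ∀ j, a j / 2 ≤ 2 ^ (n + k) := fun j =>
      Nat.div_le_of_le_mul (by rw [← pow_succ']; exact ha j)
    have hdiv : (fun j => a j / 2 ^ (k + 1)) = fun j => a j / 2 / 2 ^ k := by
      simp [Nat.div_div_eq_div_mul, pow_succ']
    calc edist (f (dyadicGrid d (n + k + 1) a)) (f (dyadicGrid d n fun j => a j / 2 ^ (k + 1)))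
        ≤ edist (f (dyadicGrid d (n + k + 1) a)) (f (dyadicGrid d (n + k) fun j => a j / 2))
          + edist (f (dyadicGrid d (n + k) fun j => a j / 2))
              (f (dyadicGrid d n fun j => a j / 2 / 2 ^ k)) := hdiv ▸ edist_triangle _ _ _
      _ ≤ d * K (n + k + 1) + ∑ t ∈ Finset.range k, d * K (n + t + 1) :=
        add_le_add (edist_dyadicGrid_succ_div_two_le f (hK _) ha) (ih ha')
      _ = ∑ t ∈ Finset.range (k + 1), d * K (n + t + 1) := by rw [Finset.sum_range_succ, add_comm]

theorem edist_dyadicGrid_le_of_dist_le {K : ℕ → ℝ≥0∞}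
    (hK : ∀ n, ∀ p ∈ dyadicPairs d n, edist (f p.1) (f p.2) ≤ K n) {n k : ℕ} {a b : Fin d → ℕ}
    (ha : ∀ j, a j ≤ 2 ^ (n + k)) (hb : ∀ j, b j ≤ 2 ^ (n + k))
    (hab : ∀ j, Nat.dist (a j) (b j) ≤ 2 * 2 ^ k) :
    edist (f (dyadicGrid d (n + k) a)) (f (dyadicGrid d (n + k) b))
      ≤ 2 * d * ∑ t ∈ Finset.range (k + 1), K (n + t) := by
  have hcoarse {c : Fin d → ℕ} (hc : ∀ j, c j ≤ 2 ^ (n + k)) (j : Fin d) :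
      c j / 2 ^ k ≤ 2 ^ n :=
    Nat.div_le_of_le_mul (by rw [← pow_add, add_comm]; exact hc j)
  have hmid : edist (f (dyadicGrid d n fun j => a j / 2 ^ k))
      (f (dyadicGrid d n fun j => b j / 2 ^ k)) ≤ 2 * d * K n := by
    refine (edist_dyadicGrid_le_sum_dist_mul f (hK n) (hcoarse ha) (hcoarse hb)).trans ?_
    have hsum : ∑ j, Nat.dist (a j / 2 ^ k) (b j / 2 ^ k) ≤ ∑ _j : Fin d, 2 :=
      Finset.sum_le_sum fun j _ => Nat.dist_div_le_two (hab j)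
    rw [Finset.sum_const, Finset.card_univ, Fintype.card_fin, smul_eq_mul] at hsum
    gcongr
    rw [mul_comm]
    exact_mod_cast hsum
  calc edist (f (dyadicGrid d (n + k) a)) (f (dyadicGrid d (n + k) b))
      ≤ edist (f (dyadicGrid d (n + k) a)) (f (dyadicGrid d n fun j => a j / 2 ^ k))
        + edist (f (dyadicGrid d n fun j => a j / 2 ^ k)) (f (dyadicGrid d n fun j => b j / 2 ^ k))
        + edist (f (dyadicGrid d n fun j => b j / 2 ^ k)) (f (dyadicGrid d (n + k) b)) :=
        edist_triangle4 _ _ _ _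
    _ ≤ ∑ t ∈ Finset.range k, d * K (n + t + 1) + 2 * d * K n
        + ∑ t ∈ Finset.range k, d * K (n + t + 1) := by
      rw [edist_comm _ (f (dyadicGrid d (n + k) b))]
      gcongr
      · exact edist_dyadicGrid_div_two_pow_le f hK n k ha
      · exact edist_dyadicGrid_div_two_pow_le f hK n k hb
    _ = 2 * d * ∑ t ∈ Finset.range (k + 1), K (n + t) := by
      simp only [Finset.sum_range_succ', ← Finset.mul_sum, add_zero, add_assoc]
      ring

end ChainBounds

theorem div_ofReal_rpow_le_mul_two_rpow (r : ℝ≥0∞) {δ α : ℝ} {n : ℕ} (hα : 0 ≤ α)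
    (hδ : 1 / 2 ^ n ≤ δ) :
    r / ENNReal.ofReal (δ ^ α) ≤ r * ENNReal.ofReal ((2 : ℝ) ^ ((n : ℝ) * α)) := by
  have hδ0 : 0 ≤ δ := le_trans (by positivity) hδ
  have hone : 1 ≤ (2 : ℝ) ^ ((n : ℝ) * α) * δ ^ α := by
    rw [Real.rpow_natCast_mul (by norm_num), ← Real.mul_rpow (by positivity) hδ0]
    refine Real.one_le_rpow ?_ hα
    rwa [div_le_iff₀' (by positivity)] at hδ
  refine ENNReal.div_le_of_le_mul ?_
  calc r = r * ENNReal.ofReal 1 := by simp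
    _ ≤ r * ENNReal.ofReal ((2 : ℝ) ^ ((n : ℝ) * α) * δ ^ α) := by gcongr
    _ = r * ENNReal.ofReal ((2 : ℝ) ^ ((n : ℝ) * α)) * ENNReal.ofReal (δ ^ α) := by
      rw [ENNReal.ofReal_mul (by positivity), mul_assoc]

theorem edist_div_rpow_le_of_mem_dyadicLevel {X : Type*} [PseudoEMetricSpace X] {d : ℕ}
    (f : EuclideanSpace ℝ (Fin d) → X) {K : ℕ → ℝ≥0∞}
    (hK : ∀ n, ∀ p ∈ dyadicPairs d n, edist (f p.1) (f p.2) ≤ K n) {α : ℝ} (hα : 0 ≤ α)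
    {m : ℕ} {x y : EuclideanSpace ℝ (Fin d)} (hx : x ∈ dyadicLevel d m)
    (hy : y ∈ dyadicLevel d m) (hxy : x ≠ y) :
    edist (f x) (f y) / ENNReal.ofReal (‖x - y‖ ^ α)
      ≤ 2 * d * ∑' i : ℕ, ENNReal.ofReal ((2 : ℝ) ^ ((i : ℝ) * α)) * K i := by
  obtain ⟨a, ha, rfl⟩ := exists_dyadicGrid_eq hx
  obtain ⟨b, hb, rfl⟩ := exists_dyadicGrid_eq hy
  obtain ⟨n, hnm, hn, hscale⟩ :=
    exists_dyadic_scale (one_div_two_pow_le_norm_dyadicGrid_sub (n := m) (ne_of_apply_ne _ hxy))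
  obtain ⟨k, rfl⟩ := Nat.exists_eq_add_of_le hnm
  have hab := dist_le_of_min_norm_dyadicGrid_sub_le ha hb hscale
  set u : ℕ → ℝ≥0∞ := fun i => ENNReal.ofReal ((2 : ℝ) ^ ((i : ℝ) * α)) * K i
  calc edist (f (dyadicGrid d (n + k) a)) (f (dyadicGrid d (n + k) b))
        / ENNReal.ofReal (‖dyadicGrid d (n + k) a - dyadicGrid d (n + k) b‖ ^ α)
      ≤ edist (f (dyadicGrid d (n + k) a)) (f (dyadicGrid d (n + k) b))
          * ENNReal.ofReal ((2 : ℝ) ^ ((n : ℝ) * α)) :=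
        div_ofReal_rpow_le_mul_two_rpow _ hα hn
    _ ≤ 2 * d * (∑ t ∈ Finset.range (k + 1), K (n + t))
          * ENNReal.ofReal ((2 : ℝ) ^ ((n : ℝ) * α)) := by
        gcongr
        exact edist_dyadicGrid_le_of_dist_le f hK ha hb hab
    _ ≤ 2 * d * ∑ t ∈ Finset.range (k + 1), u (n + t) := by
        rw [mul_assoc, Finset.sum_mul]
        gcongr with t
        simp only [u, Nat.cast_add]
        rw [mul_comm]
        gcongr
        · norm_num
        · exact le_add_of_nonneg_right t.cast_nonneg
    _ ≤ 2 * d * ∑' i, u i := by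
        gcongr
        exact (ENNReal.sum_le_tsum _).trans
          (ENNReal.tsum_comp_le_tsum_of_injective (add_right_injective n) u)

theorem two_mul_natCast_le_ofReal_two_rpow {α : ℝ} (hα : 0 ≤ α) (d : ℕ) :
    2 * (d : ℝ≥0∞) ≤ ENNReal.ofReal ((2 : ℝ) ^ ((1 : ℝ) + α) * d) := by
  rw [ENNReal.ofReal_mul (by positivity), ENNReal.ofReal_natCast]
  gcongr
  rw [← ENNReal.ofReal_ofNat 2]
  gcongr
  exact Real.self_le_rpow_of_one_le (by norm_num) (by linarith)

theorem stmt3_general {E : Type*} [NormedAddCommGroup E] {d : ℕ}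
    (f : EuclideanSpace ℝ (Fin d) → E)
    (α : ℝ) (hα0 : 0 ≤ α)
    (K : ℕ → ℝ≥0∞)
    (hK : ∀ i, K i = ⨆ p ∈ dyadicPairs d i, (‖f p.1 - f p.2‖₊ : ℝ≥0∞)) :
    (⨆ x ∈ dyadicPts d, ⨆ y ∈ dyadicPts d, ⨆ _ : x ≠ y,
        (‖f x - f y‖₊ : ℝ≥0∞) / ENNReal.ofReal (‖x - y‖ ^ α))
      ≤ ENNReal.ofReal ((2 : ℝ) ^ ((1 : ℝ) + α) * d) *
          ∑' i : ℕ, ENNReal.ofReal ((2 : ℝ) ^ ((i : ℝ) * α)) * K i := by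
  have hK' : ∀ n, ∀ p ∈ dyadicPairs d n, edist (f p.1) (f p.2) ≤ K n := fun n p hp => by
    rw [edist_nndist, nndist_eq_nnnorm, hK]
    exact le_iSup₂_of_le p hp le_rfl
  refine iSup₂_le fun x hx => iSup₂_le fun y hy => iSup_le fun hxy => ?_
  obtain ⟨mx, hmx⟩ := Set.mem_iUnion.1 hx
  obtain ⟨my, hmy⟩ := Set.mem_iUnion.1 hy
  rw [← nndist_eq_nnnorm, ← edist_nndist]
  calc edist (f x) (f y) / ENNReal.ofReal (‖x - y‖ ^ α)
      ≤ 2 * d * ∑' i : ℕ, ENNReal.ofReal ((2 : ℝ) ^ ((i : ℝ) * α)) * K i :=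
        edist_div_rpow_le_of_mem_dyadicLevel f hK' hα0 (dyadicLevel_mono (le_max_left mx my) hmx)
          (dyadicLevel_mono (le_max_right mx my) hmy) hxy
    _ ≤ _ := by gcongr; exact two_mul_natCast_le_ofReal_two_rpow hα0 d

/-- For a function `f` on the dyadic points of `[0,1]^d`, `0 ≤ α ≤ 1`, and
`K_i = max_{(x,y) ∈ Δ_i} ‖f(x) - f(y)‖`, the Hölder seminorm
`M_α = sup { ‖f(x) - f(y)‖ / |x-y|^α : x ≠ y dyadic }` satisfies
`M_α ≤ 2^{1+α} d · Σ_{i=0}^∞ 2^{iα} K_i` (both sides in `[0,∞]`). -/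
theorem stmt3 {E : Type*} [NormedAddCommGroup E] {d : ℕ}
    (f : EuclideanSpace ℝ (Fin d) → E)
    (α : ℝ) (hα0 : 0 ≤ α) (hα1 : α ≤ 1)
    (K : ℕ → ℝ≥0∞)
    (hK : ∀ i, K i = ⨆ p ∈ dyadicPairs d i, (‖f p.1 - f p.2‖₊ : ℝ≥0∞)) :
    (⨆ x ∈ dyadicPts d, ⨆ y ∈ dyadicPts d, ⨆ _ : x ≠ y,
        (‖f x - f y‖₊ : ℝ≥0∞) / ENNReal.ofReal (‖x - y‖ ^ α))
      ≤ ENNReal.ofReal ((2 : ℝ) ^ ((1 : ℝ) + α) * d) *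
          ∑' i : ℕ, ENNReal.ofReal ((2 : ℝ) ^ ((i : ℝ) * α)) * K i :=
  stmt3_general f α hα0 K hK
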